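/- arXiv:1603.01179 — 4 statements merged into one kernel-verified Lean document; each statement's English description precedes it below -/
import Mathlib

section
/- Every connected AT-free graph is 1-laminar; that is, every connected graph containing no asteroidal triple has a diametral path μ such that every vertex of the graph is at distance at most 1 from some vertex of μ. -/
open SimpleGraph

/-- A walk `p` is a diametral path: a shortest path between two vertices at distance `diam G`. -/
def IsDiametralPath {V : Type*} (G : SimpleGraph V) {u v : V} (p : G.Walk u v) : Prop :=
  p.length = G.dist u v ∧ G.dist u v = G.diam

/-- A walk `p` is `k`-dominating: every vertex of `G` is at distance at most `k`
from some vertex of `p`. -/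
def IsKDominating {V : Type*} (G : SimpleGraph V) (k : ℕ) {u v : V} (p : G.Walk u v) : Prop :=
  ∀ x : V, ∃ y ∈ p.support, G.dist x y ≤ k

/-- `G` is `k`-laminar: it has a `k`-dominating diametral path. -/
def KLaminar {V : Type*} (G : SimpleGraph V) (k : ℕ) : Prop :=
  ∃ (u v : V) (p : G.Walk u v), IsDiametralPath G p ∧ IsKDominating G k p

/-- There is a walk from `a` to `b` avoiding the closed neighborhood of `c`. -/
def WalkAvoiding {V : Type*} (G : SimpleGraph V) (a b c : V) : Prop :=
  ∃ p : G.Walk a b, ∀ x ∈ p.support, x ≠ c ∧ ¬ G.Adj c x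

/-- `(a, b, c)` is an asteroidal triple of `G`: three pairwise distinct nonadjacent vertices
such that any two of them are joined by a path avoiding the closed neighborhood of the third. -/
def IsAsteroidalTriple {V : Type*} (G : SimpleGraph V) (a b c : V) : Prop :=
  a ≠ b ∧ a ≠ c ∧ b ≠ c ∧ ¬ G.Adj a b ∧ ¬ G.Adj a c ∧ ¬ G.Adj b c ∧
    WalkAvoiding G a b c ∧ WalkAvoiding G a c b ∧ WalkAvoiding G b c a

/-- `G` is AT-free if it contains no asteroidal triple. -/
def ATFree {V : Type*} (G : SimpleGraph V) : Prop :=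
  ∀ a b c : V, ¬ IsAsteroidalTriple G a b c


/-!
Choose a diametral path `P` from `u` to `v` with the fewest undominated vertices (vertices
outside `N[P]`), and suppose `z` is one of them. `P` joins `u` and `v` avoiding `N[z]`, so
AT-freeness of `(u, v, z)` means that, say, every `u`–`z` path meets `N[v]`, which forces
`d(u, z) = diam G`.

From any vertex `a` dominated by `P` with `d(a, z) = diam G`, a shortest `a`–`z` path `Y` is
diametral, so by minimality of `P` some `b` dominated by `P` is undominated by `Y`. Then `Y` joins
`a` to `z` avoiding `N[b]` and `P` joins `a` to `b` avoiding `N[z]`, so AT-freeness of `(a, z, b)`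
forces every `b`–`z` path to meet `N[a]`. Hence `d(b, z) = diam G`, and the component of `z` in
`G - N[b]` strictly contains the one in `G - N[a]` (it gains `a`). In a finite graph this cannot
go on forever.
-/

namespace SimpleGraph

variable {V : Type*} {G : SimpleGraph V} {a b c p q x : V}

theorem Walk.dist_add_dist_le_length (w : G.Walk a b) (hx : x ∈ w.support) :
    G.dist a x + G.dist x b ≤ w.length := by
  classical
  calc G.dist a x + G.dist x b ≤ (w.takeUntil x hx).length + (w.dropUntil x hx).length :=
        add_le_add (dist_le _) (dist_le _)
    _ = w.length := by rw [← Walk.length_append, w.take_spec hx]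

theorem Connected.dist_le_diam [Finite V] (hconn : G.Connected) : G.dist a b ≤ G.diam :=
  have := hconn.nonempty
  SimpleGraph.dist_le_diam (connected_iff_ediam_ne_top.mp hconn)

theorem dist_le_one_of_eq_or_adj (h : x = c ∨ G.Adj c x) : G.dist c x ≤ 1 := by
  rcases h with rfl | h
  · simp
  · exact (dist_eq_one_iff_adj.mpr h).le

theorem ne_and_not_adj_of_one_lt_dist (h : 1 < G.dist c x) : x ≠ c ∧ ¬G.Adj c x :=
  ⟨by rintro rfl; simp at h, fun hadj => by simp [dist_eq_one_iff_adj.mpr hadj] at h⟩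

theorem ne_and_not_adj_comm : x ≠ c ∧ ¬G.Adj c x ↔ c ≠ x ∧ ¬G.Adj x c := by
  rw [ne_comm, G.adj_comm]

/-- A shortest `p`–`q` path meets `N[c]` at some `x ≠ p`, and `d(c, q) ≤ 1 + d(x, q) ≤ d(p, q)`. -/
theorem Connected.dist_le_dist_of_not_walkAvoiding (hconn : G.Connected)
    (hp : p ≠ c ∧ ¬G.Adj c p) (h : ¬WalkAvoiding G p q c) : G.dist c q ≤ G.dist p q := by
  obtain ⟨σ, hσ⟩ := hconn.exists_walk_length_eq_dist p q
  obtain ⟨x, hxσ, hx⟩ : ∃ x ∈ σ.support, x = c ∨ G.Adj c x := by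
    by_contra! hσc
    exact h ⟨σ, fun x hx => ⟨(hσc x hx).1, (hσc x hx).2⟩⟩
  have hpx : 1 ≤ G.dist p x := hconn.pos_dist_of_ne (by rintro rfl; tauto)
  calc G.dist c q ≤ G.dist c x + G.dist x q := hconn.dist_triangle
    _ ≤ G.dist p x + G.dist x q := by grw [dist_le_one_of_eq_or_adj hx, hpx]
    _ ≤ G.dist p q := hσ ▸ σ.dist_add_dist_le_length hxσ

open Classical in
noncomputable def Walk.undominated [Fintype V] (w : G.Walk a b) : Finset V :=
  Finset.univ.filter fun c => ∀ x ∈ w.support, x ≠ c ∧ ¬G.Adj c x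

section Undominated

variable [Fintype V] {w : G.Walk a b}

theorem Walk.mem_undominated : c ∈ w.undominated ↔ ∀ x ∈ w.support, x ≠ c ∧ ¬G.Adj c x := by
  simp [Walk.undominated]

theorem Walk.not_mem_undominated : c ∉ w.undominated ↔ ∃ x ∈ w.support, x = c ∨ G.Adj c x := by
  simp only [Walk.mem_undominated, not_forall, not_and_or, not_not, exists_prop]

theorem Walk.undominated_reverse (w : G.Walk a b) : w.reverse.undominated = w.undominated := by
  ext c
  simp [Walk.mem_undominated]

end Undominated

end SimpleGraph

namespace WalkAvoiding

variable {V : Type*} {G : SimpleGraph V} {a b c d x y z : V}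

theorem symm (h : WalkAvoiding G a b c) : WalkAvoiding G b a c := by
  obtain ⟨p, hp⟩ := h
  exact ⟨p.reverse, by simpa using hp⟩

theorem trans (h₁ : WalkAvoiding G a b c) (h₂ : WalkAvoiding G b d c) : WalkAvoiding G a d c := by
  obtain ⟨p, hp⟩ := h₁
  obtain ⟨q, hq⟩ := h₂
  refine ⟨p.append q, fun x hx => ?_⟩
  rcases (p.mem_support_append_iff q).mp hx with hx | hx
  exacts [hp x hx, hq x hx]

theorem of_eq_or_adj (hab : b = a ∨ G.Adj a b) (ha : a ≠ c ∧ ¬G.Adj c a)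
    (hb : b ≠ c ∧ ¬G.Adj c b) : WalkAvoiding G a b c := by
  rcases hab with rfl | hab
  · exact ⟨.nil, by simpa using hb⟩
  · exact ⟨.cons hab .nil, by simp [ha, hb]⟩

theorem of_mem_support (p : G.Walk a b) (hp : ∀ v ∈ p.support, v ≠ c ∧ ¬G.Adj c v)
    (hx : x ∈ p.support) (hy : y ∈ p.support) : WalkAvoiding G x y c := by
  classical
  have take_avoids : ∀ v (hv : v ∈ p.support), WalkAvoiding G a v c := fun v hv =>
    ⟨p.takeUntil v hv, fun w hw => hp w (p.support_takeUntil_subset_support hv hw)⟩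
  exact (take_avoids x hx).symm.trans (take_avoids y hy)

/-- A neighbour of `b` joined to `z` avoiding `N[a]` would join `b` itself to `z` avoiding `N[a]`. -/
theorem of_not_walkAvoiding (hb : b ≠ a ∧ ¬G.Adj a b) (hbz : ¬WalkAvoiding G b z a)
    (hx : WalkAvoiding G x z a) : WalkAvoiding G x z b := by
  obtain ⟨p, hp⟩ := hx
  have tail : ∀ v ∈ p.support, WalkAvoiding G v z a := fun v hv =>
    of_mem_support p hp hv p.end_mem_support
  refine ⟨p, fun v hv => ⟨?_, fun hbv => ?_⟩⟩
  · rintro rfl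
    exact hbz (tail v hv)
  · exact hbz ((of_eq_or_adj (.inr hbv) hb (hp v hv)).trans (tail v hv))

theorem of_not_mem_undominated [Fintype V] {u v : V} {P : G.Walk u v} (hc : c ∈ P.undominated)
    (ha : a ∉ P.undominated) (hb : b ∉ P.undominated) (hac : a ≠ c ∧ ¬G.Adj c a)
    (hbc : b ≠ c ∧ ¬G.Adj c b) : WalkAvoiding G a b c := by
  have hP := P.mem_undominated.mp hc
  obtain ⟨x, hxP, hx⟩ := P.not_mem_undominated.mp ha
  obtain ⟨y, hyP, hy⟩ := P.not_mem_undominated.mp hb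
  exact (of_eq_or_adj hx hac (hP x hxP)).trans <|
    (of_mem_support P hP hxP hyP).trans (of_eq_or_adj hy hbc (hP y hyP)).symm

end WalkAvoiding

theorem ATFree.not_walkAvoiding {V : Type*} {G : SimpleGraph V} {a b c : V} (hAT : ATFree G)
    (hab : b ≠ a ∧ ¬G.Adj a b) (hac : c ≠ a ∧ ¬G.Adj a c) (hbc : c ≠ b ∧ ¬G.Adj b c)
    (h₁ : WalkAvoiding G a b c) (h₂ : WalkAvoiding G a c b) : ¬WalkAvoiding G b c a := fun h₃ =>
  hAT a b c ⟨hab.1.symm, hac.1.symm, hbc.1.symm, hab.2, hac.2, hbc.2, h₁, h₂, h₃⟩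

theorem IsDiametralPath.reverse {V : Type*} {G : SimpleGraph V} {u v : V} {p : G.Walk u v}
    (hp : IsDiametralPath G p) : IsDiametralPath G p.reverse := by
  rw [IsDiametralPath, SimpleGraph.Walk.length_reverse, G.dist_comm]
  exact hp

namespace SimpleGraph

variable {V : Type*} [Fintype V] {G : SimpleGraph V} {a b u v z : V}

open Classical in
noncomputable def avoidingComponent (G : SimpleGraph V) (z c : V) : Finset V :=
  Finset.univ.filter fun x => WalkAvoiding G x z c

theorem avoidingComponent_ssubset (hb : b ≠ a ∧ ¬G.Adj a b) (hbz : ¬WalkAvoiding G b z a)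
    (haz : WalkAvoiding G a z b) : G.avoidingComponent z a ⊂ G.avoidingComponent z b := by
  refine Finset.ssubset_iff_of_subset (fun x hx => ?_) |>.mpr ⟨a, ?_, ?_⟩
  · simp only [avoidingComponent, Finset.mem_filter, Finset.mem_univ, true_and] at hx ⊢
    exact hx.of_not_walkAvoiding hb hbz
  · simpa [avoidingComponent] using haz
  · simp only [avoidingComponent, Finset.mem_filter, Finset.mem_univ, true_and]
    rintro ⟨p, hp⟩
    exact (hp a p.start_mem_support).1 rfl

theorem exists_isDiametralPath_forall_card_undominated_le (hconn : G.Connected) :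
    ∃ (u v : V) (P : G.Walk u v), IsDiametralPath G P ∧
      ∀ {c d : V} (q : G.Walk c d), IsDiametralPath G q →
        P.undominated.card ≤ q.undominated.card := by
  have := hconn.nonempty
  have hdiam : ∃ w : Σ u v, G.Walk u v, IsDiametralPath G w.2.2 := by
    obtain ⟨u, v, huv⟩ := G.exists_dist_eq_diam
    obtain ⟨p, hp⟩ := hconn.exists_walk_length_eq_dist u v
    exact ⟨⟨u, v, p⟩, hp, huv⟩
  obtain ⟨⟨u, v, P⟩, hmin⟩ :=
    exists_minimalFor_of_wellFoundedLT _ (fun w => w.2.2.undominated.card) hdiam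
  exact ⟨u, v, P, hmin.prop, fun q hq =>
    le_of_not_gt fun hlt => hlt.not_ge (hmin.le_of_le (j := ⟨_, _, q⟩) hq hlt.le)⟩

section MinimalDiametralPath

variable {P : G.Walk u v}

theorem two_le_diam_of_mem_undominated (hconn : G.Connected) (hz : z ∈ P.undominated) :
    2 ≤ G.diam := by
  have hzu := P.mem_undominated.mp hz u P.start_mem_support
  exact (hconn.one_lt_dist_of_ne_of_not_adj hzu.1.symm hzu.2).trans_le hconn.dist_le_diam

theorem exists_mem_undominated_not_mem_undominated
    (hmin : ∀ {c d : V} (q : G.Walk c d), IsDiametralPath G q →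
      P.undominated.card ≤ q.undominated.card)
    (hz : z ∈ P.undominated) {q : G.Walk a z} (hq : IsDiametralPath G q) :
    ∃ b ∈ q.undominated, b ∉ P.undominated := by
  by_contra! hsub
  have hzq : z ∉ q.undominated := fun h => (q.mem_undominated.mp h z q.end_mem_support).1 rfl
  exact (Finset.card_lt_card (Finset.ssubset_iff_of_subset hsub |>.mpr ⟨z, hz, hzq⟩)).not_ge
    (hmin q hq)

theorem exists_avoidingComponent_ssubset (hconn : G.Connected) (hAT : ATFree G)
    (hmin : ∀ {c d : V} (q : G.Walk c d), IsDiametralPath G q →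
      P.undominated.card ≤ q.undominated.card)
    (hz : z ∈ P.undominated) (ha : a ∉ P.undominated) (haz : G.dist a z = G.diam) :
    ∃ b ∉ P.undominated, G.dist b z = G.diam ∧
      G.avoidingComponent z a ⊂ G.avoidingComponent z b := by
  obtain ⟨Y, hY⟩ := hconn.exists_walk_length_eq_dist a z
  obtain ⟨b, hbY, hbP⟩ := exists_mem_undominated_not_mem_undominated hmin hz ⟨hY, haz⟩
  have hbY := Y.mem_undominated.mp hbY
  have hab : b ≠ a ∧ ¬G.Adj a b := ne_and_not_adj_comm.mp (hbY a Y.start_mem_support)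
  have hza : z ≠ a ∧ ¬G.Adj a z :=
    ne_and_not_adj_of_one_lt_dist (haz ▸ two_le_diam_of_mem_undominated hconn hz)
  have hzb : z ≠ b ∧ ¬G.Adj b z := hbY z Y.end_mem_support
  have hbz : ¬WalkAvoiding G b z a := fun h => hAT.not_walkAvoiding hza hab
    (ne_and_not_adj_comm.mp hzb) ⟨Y, hbY⟩
    (WalkAvoiding.of_not_mem_undominated hz ha hbP (ne_and_not_adj_comm.mp hza)
      (ne_and_not_adj_comm.mp hzb)) h.symm
  refine ⟨b, hbP, ?_, avoidingComponent_ssubset hab hbz ⟨Y, hbY⟩⟩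
  exact le_antisymm hconn.dist_le_diam (haz ▸ hconn.dist_le_dist_of_not_walkAvoiding hab hbz)

theorem walkAvoiding_of_mem_undominated (hconn : G.Connected) (hAT : ATFree G)
    (hP : IsDiametralPath G P)
    (hmin : ∀ {c d : V} (q : G.Walk c d), IsDiametralPath G q →
      P.undominated.card ≤ q.undominated.card)
    (hz : z ∈ P.undominated) : WalkAvoiding G u z v := by
  classical
  by_contra h
  have huz : G.dist u z = G.diam := by
    have hzv := ne_and_not_adj_comm.mp (P.mem_undominated.mp hz v P.end_mem_support)
    refine le_antisymm hconn.dist_le_diam ?_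
    calc G.diam = G.dist v u := by rw [G.dist_comm, hP.2]
      _ ≤ G.dist z u := hconn.dist_le_dist_of_not_walkAvoiding hzv fun h' => h h'.symm
      _ = G.dist u z := G.dist_comm
  let good := Finset.univ.filter fun a => a ∉ P.undominated ∧ G.dist a z = G.diam
  obtain ⟨a, ha, hmax⟩ := good.exists_max_image (fun a => (G.avoidingComponent z a).card)
    ⟨u, by simpa [good, huz] using P.not_mem_undominated.mpr ⟨u, P.start_mem_support, .inl rfl⟩⟩
  simp only [good, Finset.mem_filter, Finset.mem_univ, true_and] at ha hmax
  obtain ⟨b, hbP, hbz, hab⟩ := exists_avoidingComponent_ssubset hconn hAT hmin hz ha.1 ha.2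
  exact (Finset.card_lt_card hab).not_ge (hmax b ⟨hbP, hbz⟩)

end MinimalDiametralPath

end SimpleGraph

/-- Every connected AT-free graph is 1-laminar. -/
theorem atFree_is_one_laminar {V : Type*} [Fintype V] (G : SimpleGraph V)
    (hconn : G.Connected) (hAT : ATFree G) : KLaminar G 1 := by
  obtain ⟨u, v, P, hP, hmin⟩ := exists_isDiametralPath_forall_card_undominated_le hconn
  refine ⟨u, v, P, hP, fun z => ?_⟩
  by_contra! hfar
  have hz : z ∈ P.undominated :=
    P.mem_undominated.mpr fun x hx => ne_and_not_adj_of_one_lt_dist (hfar x hx)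
  have hPz := P.mem_undominated.mp hz
  have huv : v ≠ u ∧ ¬G.Adj u v :=
    ne_and_not_adj_of_one_lt_dist (hP.2 ▸ two_le_diam_of_mem_undominated hconn hz)
  have hvz : WalkAvoiding G v z u := walkAvoiding_of_mem_undominated hconn hAT hP.reverse
    (fun q hq => by rw [P.undominated_reverse]; exact hmin q hq) (by rwa [P.undominated_reverse])
  exact hAT.not_walkAvoiding (ne_and_not_adj_comm.mp (hPz u P.start_mem_support)) huv
    (hPz v P.end_mem_support) (walkAvoiding_of_mem_undominated hconn hAT hP hmin hz)
    ⟨P, hPz⟩ hvz.symm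
end

section
/- Every connected cocomparability graph is 1-laminar; that is, if the complement of a connected graph G admits a transitive orientation of its edge set, then G has a diametral path μ such that every vertex of G is at distance at most 1 from some vertex of μ. -/
open SimpleGraph

/-- The edge set of `G` admits a transitive orientation. -/
def HasTransitiveOrientation {V : Type*} (G : SimpleGraph V) : Prop :=
  ∃ r : V → V → Prop, (∀ u v, G.Adj u v ↔ (r u v ∨ r v u)) ∧
    (∀ u v, r u v → ¬ r v u) ∧ Transitive r

/-!
A linear extension of a transitive orientation of `Gᶜ` is a cocomparability ordering of `G`:
if `a < b < c` and `a ~ c`, then `b` is adjacent to `a` or to `c` (otherwise `a → b → c` in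
the orientation, so `a ≁ c`). Consequently any walk from `a` to `b` passes within distance one
of every vertex lying between `a` and `b` in the ordering. Choose a diametral pair `x ≤ y` with
`x` as small as possible and then `y` as large as possible. A vertex `z < x` at distance at
least two from `x` would have `x` between `z` and `y`, which forces `d(z, y) ≥ d(x, y) = diam G`
and contradicts the choice of `x`; symmetrically for `z > y`. Hence a shortest `x`–`y` path is
1-dominating.
-/
namespace SimpleGraph

variable {V : Type*} {G : SimpleGraph V}

lemma Walk.dist_add_dist_le_length_s1 {u v w : V} (p : G.Walk u v) (hw : w ∈ p.support) :
    G.dist u w + G.dist w v ≤ p.length := by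
  classical
  calc G.dist u w + G.dist w v
      ≤ (p.takeUntil w hw).length + (p.dropUntil w hw).length :=
        add_le_add (dist_le _) (dist_le _)
    _ = p.length := by rw [← Walk.length_append, Walk.take_spec]

section CocomparabilityOrdering

variable [LinearOrder V]

def IsCocomparabilityOrdering (G : SimpleGraph V) : Prop :=
  ∀ ⦃a b c : V⦄, a < b → b < c → G.Adj a c → G.Adj a b ∨ G.Adj b c

lemma isCocomparabilityOrdering_of_orientation_compl {r : V → V → Prop} [IsTrans V r]
    (hadj : ∀ u v, Gᶜ.Adj u v ↔ r u v ∨ r v u)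
    (hlt : ∀ u v, r u v → u < v) : G.IsCocomparabilityOrdering := by
  intro a b c hab hbc hac
  by_contra! h
  have orient : ∀ {u v}, u < v → ¬ G.Adj u v → r u v := fun {u v} huv hn =>
    ((hadj u v).1 ((G.compl_adj u v).2 ⟨huv.ne, hn⟩)).resolve_right
      fun hvu => (hlt v u hvu).not_gt huv
  have hrac : r a c := _root_.trans (orient hab h.1) (orient hbc h.2)
  exact ((G.compl_adj a c).1 ((hadj a c).2 (.inl hrac))).2 hac

namespace IsCocomparabilityOrdering

variable (hG : G.IsCocomparabilityOrdering)
include hG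

lemma dist_le_one_of_mem_uIcc {a b c : V} (hac : G.Adj a c) (hb : b ∈ Set.uIcc a c) :
    G.dist b a ≤ 1 ∨ G.dist b c ≤ 1 := by
  rcases eq_or_ne b a with rfl | hba
  · simp
  rcases eq_or_ne b c with rfl | hbc
  · simp
  rcases Set.mem_uIcc.1 hb with ⟨hab, hbc'⟩ | ⟨hcb, hba'⟩
  · rcases hG (hab.lt_of_ne' hba) (hbc'.lt_of_ne hbc) hac with h | h
    · exact .inl (dist_eq_one_iff_adj.2 h.symm).le
    · exact .inr (dist_eq_one_iff_adj.2 h).le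
  · rcases hG (hcb.lt_of_ne' hbc) (hba'.lt_of_ne hba) hac.symm with h | h
    · exact .inr (dist_eq_one_iff_adj.2 h.symm).le
    · exact .inl (dist_eq_one_iff_adj.2 h).le

lemma exists_mem_support_dist_le_one {a b z : V} (p : G.Walk a b) (hz : z ∈ Set.uIcc a b) :
    ∃ y ∈ p.support, G.dist z y ≤ 1 := by
  induction p with
  | nil =>
    rw [Set.uIcc_self, Set.mem_singleton_iff] at hz
    exact ⟨z, by simp [hz], by simp⟩
  | @cons u v w huv q ih =>
    rcases Set.uIcc_subset_uIcc_union_uIcc (b := v) hz with hz | hz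
    · rcases hG.dist_le_one_of_mem_uIcc huv hz with h | h
      · exact ⟨u, by simp, h⟩
      · exact ⟨v, by simp, h⟩
    · obtain ⟨y, hy, h⟩ := ih hz
      exact ⟨y, by simp [hy], h⟩

lemma dist_le_dist_of_mem_uIcc (hconn : G.Connected) {x y z : V} (hzx : 1 < G.dist z x)
    (hx : x ∈ Set.uIcc z y) : G.dist x y ≤ G.dist z y := by
  obtain ⟨p, hp⟩ := hconn.exists_walk_length_eq_dist z y
  obtain ⟨w, hw, hxw⟩ := hG.exists_mem_support_dist_le_one p hx
  have hsplit := p.dist_add_dist_le_length_s1 hw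
  have hzw : G.dist z x ≤ G.dist z w + G.dist w x := hconn.dist_triangle
  have hxy : G.dist x y ≤ G.dist x w + G.dist w y := hconn.dist_triangle
  rw [dist_comm (u := w)] at hzw
  -- `d(x, w) ≤ 1`, while `d(z, x) ≥ 2` forces `d(z, w) ≥ 1`
  omega

end IsCocomparabilityOrdering

lemma exists_extremal_diametral_pair [Finite V] [Nonempty V] (G : SimpleGraph V) :
    ∃ x y, x ≤ y ∧ G.dist x y = G.diam ∧
      (∀ a b, a ≤ b → G.dist a b = G.diam → x ≤ a) ∧
      (∀ b, x ≤ b → G.dist x b = G.diam → b ≤ y) := by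
  classical
  have := Fintype.ofFinite V
  let lower := Finset.univ.filter fun a => ∃ b, a ≤ b ∧ G.dist a b = G.diam
  have hlower : lower.Nonempty := by
    obtain ⟨u, v, huv⟩ := G.exists_dist_eq_diam
    rcases le_total u v with h | h
    · exact ⟨u, by simpa [lower] using ⟨v, h, huv⟩⟩
    · exact ⟨v, by simpa [lower] using ⟨u, h, dist_comm.trans huv⟩⟩
  let x := lower.min' hlower
  let upper := Finset.univ.filter fun b => x ≤ b ∧ G.dist x b = G.diam
  have hupper : upper.Nonempty := by
    obtain ⟨b, hb⟩ := (Finset.mem_filter.1 (lower.min'_mem hlower)).2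
    exact ⟨b, Finset.mem_filter.2 ⟨Finset.mem_univ _, hb⟩⟩
  refine ⟨x, upper.max' hupper, ?_, ?_, fun a b hab h => ?_, fun b hxb h => ?_⟩
  · exact (Finset.mem_filter.1 (upper.max'_mem hupper)).2.1
  · exact (Finset.mem_filter.1 (upper.max'_mem hupper)).2.2
  · exact lower.min'_le a (by simpa [lower] using ⟨b, hab, h⟩)
  · exact upper.le_max' b (by simpa [upper] using ⟨hxb, h⟩)

theorem IsCocomparabilityOrdering.kLaminar_one [Finite V] (hG : G.IsCocomparabilityOrdering)
    (hconn : G.Connected) : KLaminar G 1 := by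
  have := hconn.nonempty
  have hdiam : ∀ u v, G.dist u v ≤ G.diam := fun u v =>
    dist_le_diam (G.connected_iff_ediam_ne_top.1 hconn)
  obtain ⟨x, y, hxy, hdxy, hxmin, hymax⟩ := G.exists_extremal_diametral_pair
  obtain ⟨p, hp⟩ := hconn.exists_walk_length_eq_dist x y
  refine ⟨x, y, p, ⟨hp, hdxy⟩, fun z => ?_⟩
  rcases lt_or_ge z x with hzx | hxz
  · refine ⟨x, p.start_mem_support, not_lt.1 fun h =>
      hzx.not_ge (hxmin z y (hzx.le.trans hxy) ?_)⟩
    have := hG.dist_le_dist_of_mem_uIcc hconn h (Set.mem_uIcc_of_le hzx.le hxy)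
    exact le_antisymm (hdiam z y) (hdxy ▸ this)
  rcases le_or_gt z y with hzy | hyz
  · exact hG.exists_mem_support_dist_le_one p (Set.mem_uIcc_of_le hxz hzy)
  · refine ⟨y, p.end_mem_support, not_lt.1 fun h => hyz.not_ge (hymax z hxz ?_)⟩
    have := hG.dist_le_dist_of_mem_uIcc hconn h (Set.mem_uIcc_of_ge hxy hyz.le)
    rw [dist_comm (u := y), dist_comm (u := z)] at this
    exact le_antisymm (hdiam x z) (hdxy ▸ this)

end CocomparabilityOrdering

end SimpleGraph

theorem IsStrictOrder.exists_linearOrder {V : Type*} (r : V → V → Prop) [IsStrictOrder V r] :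
    ∃ _ : LinearOrder V, ∀ u v, r u v → u < v := by
  let _ := partialOrderOfSO r
  refine ⟨(inferInstance : LinearOrder (LinearExtension V)), fun u v huv => ?_⟩
  exact (toLinearExtension.monotone (Or.inr huv)).lt_of_ne
    fun h => irrefl_of r v ((show u = v from h) ▸ huv)

theorem HasTransitiveOrientation.exists_isCocomparabilityOrdering {V : Type*} {G : SimpleGraph V}
    (h : HasTransitiveOrientation Gᶜ) : ∃ _ : LinearOrder V, G.IsCocomparabilityOrdering := by
  obtain ⟨r, hadj, hasymm, htrans⟩ := h
  have : IsStrictOrder V r :=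
    { irrefl := fun a h => hasymm a a h h, trans := fun _ _ _ => @htrans _ _ _ }
  obtain ⟨_, hlt⟩ := IsStrictOrder.exists_linearOrder r
  exact ⟨_, isCocomparabilityOrdering_of_orientation_compl hadj hlt⟩

/-- Every connected cocomparability graph (the complement of `G` admits a transitive
orientation of its edges) is 1-laminar. -/
theorem cocomparability_is_one_laminar {V : Type*} [Fintype V] (G : SimpleGraph V)
    (hconn : G.Connected) (hco : HasTransitiveOrientation Gᶜ) : KLaminar G 1 := by
  obtain ⟨_, hG⟩ := hco.exists_isCocomparabilityOrdering
  exact hG.kLaminar_one hconn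
end

section
/- Let G₁ be the graph on vertex set {a,b,c,d,e,f,g,h} with edge set {ab, bc, cd, ce, ef, fd, cg, gh, hd}. Then G₁ is 1-laminar (the shortest path a,b,c,d,h is diametral and 1-dominating), but G₁ is not AT-free: (a,f,h) is an asteroidal triple. Hence the class of 1-laminar graphs is not contained in the class of AT-free graphs. -/
open SimpleGraph

/-- The graph `G₁` on vertices `a, b, c, d, e, f, g, h` (encoded as `0, …, 7`) with edges
`ab, bc, cd, ce, ef, fd, cg, gh, hd`. -/
def G1 : SimpleGraph (Fin 8) :=
  SimpleGraph.fromRel (fun u v =>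
    (u, v) ∈ [((0:Fin 8),(1:Fin 8)),(1,2),(2,3),(2,4),(4,5),(5,3),(2,6),(6,7),(7,3)])

instance : DecidableRel G1.Adj := fun u v =>
  decidable_of_iff _ (SimpleGraph.fromRel_adj _ u v).symm

/-- The path `a, b, c, d, h`. -/
def P1 : G1.Walk 0 7 :=
  .cons (show G1.Adj 0 1 by decide) (.cons (show G1.Adj 1 2 by decide)
    (.cons (show G1.Adj 2 3 by decide) (.cons (show G1.Adj 3 7 by decide) .nil)))

/-!
Labelling the vertices `a, …, h` by `0, 1, 2, 3, 3, 4, 3, 4` (their distances from `a`), the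
label grows by at most one along each edge, so `d(a, h) ≥ 4`; and every vertex lies within
distance two of `c`, so `diam G₁ ≤ 4`. Hence `a, b, c, d, h` is diametral, and every vertex lies
on it or next to it. The walks `a b c e f`, `a b c g h` and `f d h` avoid the closed
neighbourhoods of `h`, `f` and `a` respectively.
-/

namespace SimpleGraph

variable {V : Type*} {G : SimpleGraph V}

lemma Walk.apply_le_apply_add_length {f : V → ℕ} (hf : ∀ u v, G.Adj u v → f v ≤ f u + 1)
    {u v : V} (p : G.Walk u v) : f v ≤ f u + p.length := by
  induction p with
  | nil => simp
  | cons h _ ih =>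
    have := hf _ _ h
    rw [Walk.length_cons]
    omega

lemma Reachable.apply_le_apply_add_dist {f : V → ℕ} (hf : ∀ u v, G.Adj u v → f v ≤ f u + 1)
    {u v : V} (h : G.Reachable u v) : f v ≤ f u + G.dist u v := by
  obtain ⟨p, hp⟩ := h.exists_walk_length_eq_dist
  exact hp ▸ p.apply_le_apply_add_length hf

lemma edist_le_two_of_exists {u v : V} (h : ∃ w, (G.Adj u w ∨ u = w) ∧ (G.Adj w v ∨ w = v)) :
    G.edist u v ≤ 2 := by
  obtain ⟨w, huw, hwv⟩ := h
  calc G.edist u v ≤ G.edist u w + G.edist w v := G.edist_triangle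
    _ ≤ 1 + 1 :=
      add_le_add (edist_le_one_iff_adj_or_eq.mpr huw) (edist_le_one_iff_adj_or_eq.mpr hwv)
    _ = 2 := one_add_one_eq_two

end SimpleGraph

section

variable {V : Type*} {G : SimpleGraph V} {u v : V}

lemma isDiametralPath_of_ediam_le (p : G.Walk u v)
    (hp : p.length = G.dist u v) (h : G.ediam ≤ p.length) : IsDiametralPath G p := by
  have hfin : G.ediam ≠ ⊤ := ne_top_of_le_ne_top (ENat.natCast_ne_top _) h
  refine ⟨hp, le_antisymm (dist_le_diam hfin) ?_⟩
  rw [← hp]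
  exact ENat.toNat_le_of_le_natCast h

lemma isKDominating_one_of_forall (p : G.Walk u v)
    (h : ∀ x, ∃ y ∈ p.support, G.Adj x y ∨ x = y) : IsKDominating G 1 p := by
  intro x
  obtain ⟨y, hy, hxy⟩ := h x
  refine ⟨y, hy, ?_⟩
  rcases hxy with hxy | rfl
  · exact (dist_eq_one_iff_adj.mpr hxy).le
  · simp

end

lemma G1_eccent_two_le : G1.eccent 2 ≤ 2 :=
  (eccent_le_iff _ _).mpr fun u => edist_le_two_of_exists (by revert u; decide)

lemma G1_dist_zero_seven : G1.dist 0 7 = 4 := by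
  refine le_antisymm (dist_le P1) ?_
  simpa using P1.reachable.apply_le_apply_add_dist (f := ![0, 1, 2, 3, 3, 4, 3, 4]) (by decide)

lemma isDiametralPath_P1 : IsDiametralPath G1 P1 := by
  refine isDiametralPath_of_ediam_le P1 (by rw [G1_dist_zero_seven]; rfl) ?_
  calc G1.ediam ≤ 2 * G1.eccent 2 := ediam_le_two_mul_eccent 2
    _ ≤ 2 * 2 := by gcongr; exact G1_eccent_two_le
    _ = P1.length := rfl

lemma isKDominating_P1 : IsKDominating G1 1 P1 :=
  isKDominating_one_of_forall P1 (by decide)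

lemma isAsteroidalTriple_G1 : IsAsteroidalTriple G1 0 5 7 := by
  refine ⟨by decide, by decide, by decide, by decide, by decide, by decide, ?_, ?_, ?_⟩
  · exact ⟨.cons (v := 1) (by decide) <| .cons (v := 2) (by decide) <|
      .cons (v := 4) (by decide) <| .cons (by decide) .nil, by decide⟩
  · exact ⟨.cons (v := 1) (by decide) <| .cons (v := 2) (by decide) <|
      .cons (v := 6) (by decide) <| .cons (by decide) .nil, by decide⟩
  · exact ⟨.cons (v := 3) (by decide) <| .cons (by decide) .nil, by decide⟩

/-- The path `a, b, c, d, h` is a 1-dominating diametral path of `G₁`, so `G₁` is 1-laminar;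
but `(a, f, h)` is an asteroidal triple, so `G₁` is not AT-free.  Hence the class of
1-laminar graphs is not contained in the class of AT-free graphs. -/
theorem one_laminar_not_subset_ATFree :
    IsDiametralPath G1 P1 ∧ IsKDominating G1 1 P1 ∧ KLaminar G1 1 ∧
    IsAsteroidalTriple G1 0 5 7 ∧ ¬ ATFree G1 :=
  ⟨isDiametralPath_P1, isKDominating_P1, ⟨0, 7, P1, isDiametralPath_P1, isKDominating_P1⟩,
    isAsteroidalTriple_G1, fun h => h 0 5 7 isAsteroidalTriple_G1⟩
end

section
/- For every 3SAT formula φ on n boolean variables (n even, n ≥ 4) and every pair of clause vertices C_j, C_{j'} of G(φ), one has d(C_j, C_{j'}) ≤ 2(n/2 + 1) + n = 2n + 2. -/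
open SimpleGraph

/-- Vertices of the graph `G(φ)` associated with a 3SAT formula `φ` with `m` clauses over `n`
boolean variables (`n` even):
* `lit i b` is the literal vertex `X_{i+1}` (if `b = true`) or `X̄_{i+1}` (if `b = false`);
* `chain k` is the vertex `V_{k+1}` of the two pending chains `V₁ — ⋯ — V_n` and
  `V_{n+1} — ⋯ — V_{2n}`;
* `clause j` is the vertex of the clause `C_{j+1}`;
* `inner j t s` is the `(s+1)`-st internal vertex of the path of length `n/2 + 1` (with `n/2`
  internal vertices) joining the clause vertex `C_{j+1}` to the vertex of its `(t+1)`-st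
  literal. -/
inductive Vert (n m : ℕ) : Type
  | lit : Fin n → Bool → Vert n m
  | chain : Fin (2 * n) → Vert n m
  | clause : Fin m → Vert n m
  | inner : Fin m → Fin 3 → Fin (n / 2) → Vert n m
  deriving DecidableEq

/-- The base (asymmetric) adjacency relation of `G(φ)`, where the 3SAT formula `φ` assigns to
each clause index `j` and each slot `t ∈ {0,1,2}` a literal `φ j t = (i, b)` (variable index
`i`, polarity `b`):
* `X_i` and `X̄_i` are adjacent, and every vertex of `{X_i, X̄_i}` is adjacent to every vertex
  of `{X_{i+1}, X̄_{i+1}}`;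
* `V₁ — ⋯ — V_n` and `V_{n+1} — ⋯ — V_{2n}` are paths, `V_n` is moreover adjacent to both
  `X₁, X̄₁` and `V_{n+1}` to both `X_n, X̄_n`;
* each clause vertex `C_j` is joined to the vertex of each of its literals by a path of length
  `n/2 + 1` whose `n/2` internal vertices are the `inner j t s`. -/
def satRel (n m : ℕ) (φ : Fin m → Fin 3 → Fin n × Bool) : Vert n m → Vert n m → Prop
  | .lit i b, .lit i' b' => (i = i' ∧ b ≠ b') ∨ (i : ℕ) + 1 = (i' : ℕ)
  | .chain k, .chain k' => (k : ℕ) + 1 = (k' : ℕ) ∧ (k' : ℕ) ≠ n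
  | .chain k, .lit i _ => ((k : ℕ) = n - 1 ∧ (i : ℕ) = 0) ∨ ((k : ℕ) = n ∧ (i : ℕ) = n - 1)
  | .clause j, .inner j' _ s => j = j' ∧ (s : ℕ) = 0
  | .inner j t s, .inner j' t' s' => j = j' ∧ t = t' ∧ (s : ℕ) + 1 = (s' : ℕ)
  | .inner j t s, .lit i b => (s : ℕ) = n / 2 - 1 ∧ φ j t = (i, b)
  | _, _ => False

/-- The graph `G(φ)` associated with a 3SAT formula `φ`. -/
def Gphi (n m : ℕ) (φ : Fin m → Fin 3 → Fin n × Bool) : SimpleGraph (Vert n m) :=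
  SimpleGraph.fromRel (satRel n m φ)

/-!
Walk from `C_j` down one of its pendant paths to a literal vertex (`n/2 + 1` steps), climb the
ladder of literal vertices to a literal vertex of `C_{j'}` (at most `n` steps, one per rung plus
possibly one switch of polarity), and go up the pendant path of `C_{j'}` (`n/2 + 1` steps).
-/

namespace Gphi

variable {n m : ℕ} (φ : Fin m → Fin 3 → Fin n × Bool)

lemma adj_of_satRel {a b : Vert n m} (hne : a ≠ b) (h : satRel n m φ a b) :
    (Gphi n m φ).Adj a b :=
  (fromRel_adj _ a b).2 ⟨hne, Or.inl h⟩

lemma adj_lit_of_succ {i i' : Fin n} (b b' : Bool) (h : (i : ℕ) + 1 = i') :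
    (Gphi n m φ).Adj (.lit i b) (.lit i' b') :=
  adj_of_satRel φ (fun he => by cases he; omega) (Or.inr h)

lemma adj_lit_of_ne (i : Fin n) {b b' : Bool} (h : b ≠ b') :
    (Gphi n m φ).Adj (.lit i b) (.lit i b') :=
  adj_of_satRel φ (fun he => by cases he; exact h rfl) (Or.inl ⟨rfl, h⟩)

lemma exists_walk_lit_lit_of_le {i i' : Fin n} (h : i ≤ i') (b b' : Bool) :
    ∃ p : (Gphi n m φ).Walk (.lit i b) (.lit i' b'), p.length ≤ i' - i + 1 := by
  obtain ⟨d, hd⟩ : ∃ d, (i' : ℕ) = i + d := ⟨i' - i, by omega⟩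
  induction d generalizing i b with
  | zero =>
    obtain rfl : i = i' := Fin.ext (by omega)
    by_cases hb : b = b'
    · subst hb
      exact ⟨.nil, by simp⟩
    · exact ⟨.cons (adj_lit_of_ne φ i hb) .nil, by simp⟩
  | succ d ih =>
    obtain ⟨p, hp⟩ := ih (i := ⟨i + 1, by omega⟩) (Fin.mk_le_of_le_val (by omega)) b
      (by dsimp only; omega)
    refine ⟨.cons (adj_lit_of_succ φ b b rfl) p, ?_⟩
    simp only [Walk.length_cons] at hp ⊢
    omega

lemma exists_walk_lit_lit (i i' : Fin n) (b b' : Bool) :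
    ∃ p : (Gphi n m φ).Walk (.lit i b) (.lit i' b'), p.length ≤ n := by
  rcases le_total i i' with hle | hle
  · obtain ⟨p, hp⟩ := exists_walk_lit_lit_of_le φ hle b b'
    exact ⟨p, by omega⟩
  · obtain ⟨p, hp⟩ := exists_walk_lit_lit_of_le φ hle b' b
    exact ⟨p.reverse, by rw [Walk.length_reverse]; omega⟩

lemma exists_walk_clause_inner (j : Fin m) (t : Fin 3) (s : ℕ) (hs : s < n / 2) :
    ∃ p : (Gphi n m φ).Walk (.clause j) (.inner j t ⟨s, hs⟩), p.length = s + 1 := by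
  induction s with
  | zero =>
    have hadj : (Gphi n m φ).Adj (.clause j) (.inner j t ⟨0, hs⟩) :=
      adj_of_satRel φ (by simp) ⟨rfl, rfl⟩
    exact ⟨.cons hadj .nil, rfl⟩
  | succ s ih =>
    obtain ⟨p, hp⟩ := ih (by omega)
    have hadj : (Gphi n m φ).Adj (.inner j t ⟨s, by omega⟩) (.inner j t ⟨s + 1, hs⟩) :=
      adj_of_satRel φ (by simp) ⟨rfl, rfl, rfl⟩
    exact ⟨p.concat hadj, by rw [Walk.length_concat, hp]⟩

lemma exists_walk_clause_lit (hn : 0 < n / 2) (j : Fin m) (t : Fin 3) :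
    ∃ p : (Gphi n m φ).Walk (.clause j) (.lit (φ j t).1 (φ j t).2), p.length = n / 2 + 1 := by
  obtain ⟨p, hp⟩ := exists_walk_clause_inner φ j t (n / 2 - 1) (by omega)
  have hadj : (Gphi n m φ).Adj (.inner j t ⟨n / 2 - 1, by omega⟩) (.lit (φ j t).1 (φ j t).2) :=
    adj_of_satRel φ (by simp) ⟨rfl, rfl⟩
  exact ⟨p.concat hadj, by rw [Walk.length_concat, hp]; omega⟩

end Gphi

/-- For every 3SAT formula `φ` on `n` boolean variables (`n` even, `n ≥ 4`) and every pair of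
clause vertices `C_j`, `C_{j'}` of `G(φ)`, one has `d(C_j, C_{j'}) ≤ 2(n/2 + 1) + n = 2n + 2`. -/
theorem Gphi_dist_clause_le (n m : ℕ) (hn : Even n) (h4 : 4 ≤ n)
    (φ : Fin m → Fin 3 → Fin n × Bool) (j j' : Fin m) :
    (Gphi n m φ).dist (Vert.clause j) (Vert.clause j') ≤ 2 * (n / 2 + 1) + n ∧
    2 * (n / 2 + 1) + n = 2 * n + 2 := by
  have hn2 : 0 < n / 2 := by omega
  obtain ⟨p₁, hp₁⟩ := Gphi.exists_walk_clause_lit φ hn2 j 0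
  obtain ⟨p₂, hp₂⟩ := Gphi.exists_walk_lit_lit φ (φ j 0).1 (φ j' 0).1 (φ j 0).2 (φ j' 0).2
  obtain ⟨p₃, hp₃⟩ := Gphi.exists_walk_clause_lit φ hn2 j' 0
  refine ⟨?_, by have := Nat.two_mul_div_two_of_even hn; omega⟩
  calc (Gphi n m φ).dist (.clause j) (.clause j')
      ≤ (p₁.append (p₂.append p₃.reverse)).length := dist_le _
    _ ≤ 2 * (n / 2 + 1) + n := by
      simp only [Walk.length_append, Walk.length_reverse]
      omega
end
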